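/- arXiv:2601.15249 — 6 statements merged into one kernel-verified Lean document; each statement's English description precedes it below -/
import Mathlib

section
/- Let n ≥ 1 and let y ∈ ℝⁿ. Suppose y⁺ ∈ K_n satisfies ‖y − y⁺‖ ≤ ‖y − w‖ for every w ∈ K_n (i.e. y⁺ is the isotonic projection of y). Then the first coordinate satisfies y₁ ≤ (y⁺)₁; that is, the top coordinate can only increase under isotonic projection onto the monotone cone. -/
noncomputable section

/-- The monotone (isotonic) cone of nonincreasing vectors in `ℝⁿ`. -/
def monoCone (n : ℕ) : Set (EuclideanSpace ℝ (Fin n)) :=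
  {x | ∀ i j : Fin n, i ≤ j → x j ≤ x i}

/-- `p` is an isotonic projection of `y` onto the monotone cone. -/
def IsIsoProj {n : ℕ} (y p : EuclideanSpace ℝ (Fin n)) : Prop :=
  p ∈ monoCone n ∧ ∀ w ∈ monoCone n, ‖y - p‖ ≤ ‖y - w‖

/-! If `y₁ > p₁`, raising the top coordinate of `p` to `y₁` stays in the cone and strictly
decreases the distance to `y`, contradicting minimality. -/

theorem EuclideanSpace.norm_sub_single_apply_lt {ι : Type*} [Fintype ι] [DecidableEq ι]
    (v : EuclideanSpace ℝ ι) {i : ι} (hi : v i ≠ 0) :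
    ‖v - EuclideanSpace.single i (v i)‖ < ‖v‖ := by
  have hsq : ‖v - EuclideanSpace.single i (v i)‖ ^ 2 = ‖v‖ ^ 2 - v i ^ 2 := by
    rw [norm_sub_sq_real, EuclideanSpace.inner_single_right, PiLp.norm_single,
      Real.norm_eq_abs, sq_abs]
    simp only [conj_trivial]
    ring
  have hpos : 0 < v i ^ 2 := by positivity
  exact lt_of_pow_lt_pow_left₀ 2 (norm_nonneg v) (by linarith)

theorem add_single_mem_monoCone {n : ℕ} {x : EuclideanSpace ℝ (Fin n)} (hx : x ∈ monoCone n)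
    {i : Fin n} (hi : ∀ j, i ≤ j) {t : ℝ} (ht : 0 ≤ t) :
    x + EuclideanSpace.single i t ∈ monoCone n := by
  intro j k hjk
  simp only [PiLp.add_apply, PiLp.single_apply]
  have hxjk := hx j k hjk
  by_cases hk : k = i
  · have hj : j = i := le_antisymm (hk ▸ hjk) (hi j)
    simp [hj, hk]
  · split_ifs <;> linarith

/-- The top coordinate can only increase under isotonic projection onto the
monotone cone. -/
theorem top_coordinate_increases_under_isotonic_projection
    {n : ℕ} (hn : 0 < n) (y p : EuclideanSpace ℝ (Fin n))
    (hp : IsIsoProj y p) :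
    y ⟨0, hn⟩ ≤ p ⟨0, hn⟩ := by
  set i : Fin n := ⟨0, hn⟩
  by_contra! hlt
  set w := p + EuclideanSpace.single i (y i - p i)
  have hw : w ∈ monoCone n :=
    add_single_mem_monoCone hp.1 (fun j => Fin.mk_le_of_le_val j.val.zero_le) (by linarith)
  have hyw : y - w = (y - p) - EuclideanSpace.single i ((y - p) i) := by
    simp only [w, PiLp.sub_apply]
    abel
  have hcloser : ‖y - w‖ < ‖y - p‖ := by
    rw [hyw]
    exact (y - p).norm_sub_single_apply_lt (by simp only [PiLp.sub_apply]; linarith)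
  exact (hp.2 w hw).not_gt hcloser
end
end

section
/- Let n ≥ 1 and let (Ω, μ) be a probability space. Let y : Ω → ℝⁿ be a random vector and let P : ℝⁿ → ℝⁿ be a map such that for every v ∈ ℝⁿ, P v ∈ K_n and ‖v − P v‖ ≤ ‖v − w‖ for all w ∈ K_n. Let U : ℝ → ℝ be nondecreasing, and assume ω ↦ U((y ω) 1) and ω ↦ U((P (y ω)) 1) are integrable. Then ∫ U((P (y ω)) 1) dμ(ω) ≥ ∫ U((y ω) 1) dμ(ω): when the quota is one, the expected utility of the isotonically adjusted top score is at least the expected utility of the raw top score. -/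
/-!
If the projection `p` of `v` onto the monotone cone had `p₁ < v₁`, raising `p₁` to `v₁` would keep
the vector nonincreasing and strictly decrease its distance to `v`. Hence `v₁ ≤ p₁` pointwise, and
integrating the monotone utility gives the inequality of expectations.
-/

open MeasureTheory

noncomputable section

theorem EuclideanSpace.norm_sub_add_single_lt {ι : Type*} [Fintype ι] [DecidableEq ι]
    (v p : EuclideanSpace ℝ ι) {i : ι} (h : p i ≠ v i) :
    ‖v - (p + EuclideanSpace.single i (v i - p i))‖ < ‖v - p‖ := by
  set w := p + EuclideanSpace.single i (v i - p i)
  have horth : inner ℝ (v - w) (EuclideanSpace.single i (v i - p i)) = 0 := by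
    simp [w, EuclideanSpace.inner_single_right]
  have hpyth := norm_add_sq_eq_norm_sq_add_norm_sq_real horth
  rw [show v - w + EuclideanSpace.single i (v i - p i) = v - p by simp only [w]; abel] at hpyth
  have hpos : 0 < ‖EuclideanSpace.single i (v i - p i)‖ := by
    rw [PiLp.norm_single]
    exact norm_pos_iff.mpr (sub_ne_zero.mpr h.symm)
  rw [mul_self_lt_mul_self_iff (norm_nonneg _) (norm_nonneg _), hpyth]
  nlinarith

theorem add_single_zero_mem_monoCone {n : ℕ} (hn : 0 < n) {p : EuclideanSpace ℝ (Fin n)}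
    (hp : p ∈ monoCone n) {d : ℝ} (hd : 0 ≤ d) :
    p + EuclideanSpace.single ⟨0, hn⟩ d ∈ monoCone n := by
  intro i j hij
  by_cases hj : j = ⟨0, hn⟩
  · obtain rfl : i = j := le_antisymm (hj ▸ hij) (hj ▸ Fin.mk_le_of_le_val i.val.zero_le)
    exact le_rfl
  calc (p + EuclideanSpace.single (⟨0, hn⟩ : Fin n) d) j = p j := by simp [hj]
    _ ≤ p i := hp i j hij
    _ ≤ (p + EuclideanSpace.single (⟨0, hn⟩ : Fin n) d) i := by
      simp only [PiLp.add_apply, PiLp.single_apply]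
      split_ifs <;> linarith

theorem IsIsoProj.apply_zero_le {n : ℕ} (hn : 0 < n) {v p : EuclideanSpace ℝ (Fin n)}
    (h : IsIsoProj v p) : v ⟨0, hn⟩ ≤ p ⟨0, hn⟩ := by
  by_contra! hlt
  have hmem := add_single_zero_mem_monoCone hn h.1 (sub_nonneg.mpr hlt.le)
  exact (h.2 _ hmem).not_gt (EuclideanSpace.norm_sub_add_single_lt v p hlt.ne)

theorem expected_utility_of_adjusted_top_score_ge_raw_general
    {n : ℕ} (hn : 0 < n) {Ω : Type*} [MeasurableSpace Ω]
    (μ : Measure Ω)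
    (y : Ω → EuclideanSpace ℝ (Fin n))
    (P : EuclideanSpace ℝ (Fin n) → EuclideanSpace ℝ (Fin n))
    (hP : ∀ v, IsIsoProj v (P v))
    (U : ℝ → ℝ) (hU : Monotone U)
    (hint_raw : Integrable (fun ω => U (y ω ⟨0, hn⟩)) μ)
    (hint_adj : Integrable (fun ω => U (P (y ω) ⟨0, hn⟩)) μ) :
    ∫ ω, U (y ω ⟨0, hn⟩) ∂μ ≤ ∫ ω, U (P (y ω) ⟨0, hn⟩) ∂μ :=
  integral_mono hint_raw hint_adj fun ω => hU ((hP (y ω)).apply_zero_le hn)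

/-- With quota one, the expected utility of the isotonically adjusted top score is
at least the expected utility of the raw top score, for any nondecreasing utility. -/
theorem expected_utility_of_adjusted_top_score_ge_raw
    {n : ℕ} (hn : 0 < n) {Ω : Type*} [MeasurableSpace Ω]
    (μ : Measure Ω) [IsProbabilityMeasure μ]
    (y : Ω → EuclideanSpace ℝ (Fin n))
    (P : EuclideanSpace ℝ (Fin n) → EuclideanSpace ℝ (Fin n))
    (hP : ∀ v, IsIsoProj v (P v))
    (U : ℝ → ℝ) (hU : Monotone U)
    (hint_raw : Integrable (fun ω => U (y ω ⟨0, hn⟩)) μ)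
    (hint_adj : Integrable (fun ω => U (P (y ω) ⟨0, hn⟩)) μ) :
    ∫ ω, U (y ω ⟨0, hn⟩) ∂μ ≤ ∫ ω, U (P (y ω) ⟨0, hn⟩) ∂μ :=
  expected_utility_of_adjusted_top_score_ge_raw_general hn μ y P hP U hU hint_raw hint_adj
end
end

section
/- Let a, b ∈ ℝⁿ with a ⪰_no b (a majorizes b in the natural order). Let a⁺ be an isotonic projection of a onto K_n and let b⁺ be an isotonic projection of b onto K_n. Then a⁺ ⪰ b⁺, i.e. the isotonic projection of a majorizes the isotonic projection of b. -/
noncomputable section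

/-- The sum of the `k` largest entries of `x`, i.e. the maximum of `∑ i ∈ S, x i`
over all subsets `S` of cardinality `k`. -/
def topKSum {n : ℕ} (x : Fin n → ℝ) (k : ℕ) : ℝ :=
  sSup ((fun S : Finset (Fin n) => ∑ i ∈ S, x i) '' {S | S.card = k})

/-- `a` majorizes `b`: for every `k = 1, …, n` the sum of the `k` largest entries of
`a` is at least that of `b`, and the total sums agree. -/
def Majorizes {n : ℕ} (a b : Fin n → ℝ) : Prop :=
  (∀ k, 1 ≤ k → k ≤ n → topKSum b k ≤ topKSum a k) ∧ ∑ i, a i = ∑ i, b i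

/-- Partial sum of the first `k` coordinates (in natural order). -/
def partialSum {n : ℕ} (a : Fin n → ℝ) (k : ℕ) : ℝ :=
  ∑ i ∈ Finset.univ.filter (fun i : Fin n => (i : ℕ) < k), a i

/-- `a` majorizes `b` in the natural order. -/
def MajorizesNO {n : ℕ} (a b : Fin n → ℝ) : Prop :=
  (∀ k, 1 ≤ k → k ≤ n → partialSum b k ≤ partialSum a k) ∧
    partialSum a n = partialSum b n

end

/-!
Write `C_y k` for the sum of the first `k` entries of `y`. If `p` is the projection of `y` onto the
monotone cone, testing the variational inequality `⟪y - p, w - p⟫ ≤ 0` with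
`w = p ± t • 1_{[0, m)}` gives `C_y ≤ C_p`, with equality at every `m` across which `p` drops
strictly. On a maximal block where `p` is constant, `C_p` is affine between two such points, so
`C_p` lies below every concave majorant of `C_y`: it is the least concave majorant. If `a ⪰_no b`,
then `C_{a⁺}` is concave (as `a⁺` is nonincreasing) and `C_{a⁺} ≥ C_a ≥ C_b`, hence
`C_{b⁺} ≤ C_{a⁺}`. For nonincreasing vectors `C` is the sum of the largest entries, and both
projections keep the total sum.
-/

open Finset Topology RealInnerProductSpace

lemma card_mul_sum_le_card_mul_sum {ι : Type*} {A B : Finset ι} {x : ι → ℝ}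
    (h : ∀ i ∈ A, ∀ j ∈ B, x i ≤ x j) : #B * ∑ i ∈ A, x i ≤ #A * ∑ j ∈ B, x j :=
  calc #B * ∑ i ∈ A, x i = ∑ i ∈ A, ∑ _j ∈ B, x i := by rw [mul_sum]; simp [mul_comm]
    _ ≤ ∑ _i ∈ A, ∑ j ∈ B, x j := sum_le_sum fun i hi => sum_le_sum fun j hj => h i hi j hj
    _ = #A * ∑ j ∈ B, x j := by simp

lemma sum_le_sum_of_card_eq {ι : Type*} {A B : Finset ι} {x : ι → ℝ} (hAB : #A = #B)
    (h : ∀ i ∈ A, ∀ j ∈ B, x i ≤ x j) : ∑ i ∈ A, x i ≤ ∑ j ∈ B, x j := by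
  rcases (#A).eq_zero_or_pos with hA | hA
  · have hB : #B = 0 := hAB ▸ hA
    rw [card_eq_zero.1 hA, card_eq_zero.1 hB]
  · have := card_mul_sum_le_card_mul_sum h
    rw [hAB] at this
    exact le_of_mul_le_mul_left this (by rw [← hAB]; exact_mod_cast hA)

def initSeg (n k : ℕ) : Finset (Fin n) := {i | (i : ℕ) < k}

section PartialSum

variable {n : ℕ}

@[simp]
lemma mem_initSeg {k : ℕ} {i : Fin n} : i ∈ initSeg n k ↔ (i : ℕ) < k := by
  simp [initSeg]

lemma card_initSeg {k : ℕ} (hk : k ≤ n) : #(initSeg n k) = k := by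
  rw [initSeg, Fin.card_filter_val_lt, min_eq_right hk]

lemma initSeg_mono {p k : ℕ} (h : p ≤ k) : initSeg n p ⊆ initSeg n k :=
  fun _ hi => mem_initSeg.2 ((mem_initSeg.1 hi).trans_le h)

lemma card_initSeg_sdiff {p k : ℕ} (h : p ≤ k) (hk : k ≤ n) :
    #(initSeg n k \ initSeg n p) = k - p := by
  rw [card_sdiff_of_subset (initSeg_mono h), card_initSeg hk, card_initSeg (h.trans hk)]

lemma partialSum_zero (x : Fin n → ℝ) : partialSum x 0 = 0 := by
  simp [partialSum]

lemma partialSum_of_le (x : Fin n → ℝ) {k : ℕ} (hk : n ≤ k) : partialSum x k = ∑ i, x i := by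
  rw [partialSum, filter_true_of_mem fun i _ => i.isLt.trans_le hk]

lemma sum_initSeg_sdiff (x : Fin n → ℝ) {p k : ℕ} (h : p ≤ k) :
    ∑ i ∈ initSeg n k \ initSeg n p, x i = partialSum x k - partialSum x p :=
  sum_sdiff_eq_sub (initSeg_mono h)

lemma sum_le_partialSum {x : Fin n → ℝ} (hx : Antitone x) {k : ℕ} (hk : k ≤ n)
    {S : Finset (Fin n)} (hS : #S = k) : ∑ i ∈ S, x i ≤ partialSum x k := by
  have hle : ∑ i ∈ S \ initSeg n k, x i ≤ ∑ i ∈ initSeg n k \ S, x i := by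
    refine sum_le_sum_of_card_eq (card_sdiff_comm (hS.trans (card_initSeg hk).symm))
      fun i hi j hj => hx ?_
    simp only [mem_sdiff, mem_initSeg] at hi hj
    exact Fin.le_def.2 (by omega)
  calc ∑ i ∈ S, x i = ∑ i ∈ S ∩ initSeg n k, x i + ∑ i ∈ S \ initSeg n k, x i :=
        (sum_inter_add_sum_sdiff _ _ x).symm
    _ ≤ ∑ i ∈ initSeg n k ∩ S, x i + ∑ i ∈ initSeg n k \ S, x i := by rw [inter_comm]; gcongr
    _ = partialSum x k := sum_inter_add_sum_sdiff _ _ x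

lemma topKSum_eq_partialSum {x : Fin n → ℝ} (hx : Antitone x) {k : ℕ} (hk : k ≤ n) :
    topKSum x k = partialSum x k :=
  IsGreatest.csSup_eq ⟨⟨initSeg n k, card_initSeg hk, rfl⟩,
    by rintro _ ⟨S, hS, rfl⟩; exact sum_le_partialSum hx hk hS⟩

lemma partialSum_chord {x : Fin n → ℝ} (hx : Antitone x) {p k q : ℕ} (hpk : p ≤ k)
    (hkq : k ≤ q) (hq : q ≤ n) :
    ((q : ℝ) - k) * partialSum x p + ((k : ℝ) - p) * partialSum x q
      ≤ ((q : ℝ) - p) * partialSum x k := by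
  have h := card_mul_sum_le_card_mul_sum (x := x) (A := initSeg n q \ initSeg n k)
    (B := initSeg n k \ initSeg n p) fun i hi j hj => hx ?_
  · rw [sum_initSeg_sdiff x hkq, sum_initSeg_sdiff x hpk, card_initSeg_sdiff hkq hq,
      card_initSeg_sdiff hpk (hkq.trans hq), Nat.cast_sub hpk, Nat.cast_sub hkq] at h
    linear_combination h
  · simp only [mem_sdiff, mem_initSeg] at hi hj
    exact Fin.le_def.2 (by omega)

lemma partialSum_eq_add_mul_of_const {x : Fin n → ℝ} {lo hi : ℕ} {c : ℝ}
    (hc : ∀ i : Fin n, lo ≤ (i : ℕ) → (i : ℕ) < hi → x i = c) {m : ℕ} (hlo : lo ≤ m)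
    (hm : m ≤ hi) (hmn : m ≤ n) : partialSum x m = partialSum x lo + ((m : ℝ) - lo) * c := by
  rw [← sub_eq_iff_eq_add', ← sum_initSeg_sdiff x hlo, sum_congr rfl fun i hi' => hc i ?_ ?_,
    sum_const, card_initSeg_sdiff hlo hmn, nsmul_eq_mul, Nat.cast_sub hlo] <;>
  simp only [mem_sdiff, mem_initSeg] at hi' <;> omega

def DropsAt (x : Fin n → ℝ) (m : ℕ) : Prop :=
  ∀ i j : Fin n, (i : ℕ) < m → m ≤ (j : ℕ) → x j < x i

lemma DropsAt.exists_pos {x : Fin n → ℝ} {m : ℕ} (h : DropsAt x m) :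
    ∃ t > 0, ∀ i j : Fin n, (i : ℕ) < m → m ≤ (j : ℕ) → x j + t ≤ x i := by
  have : ∀ᶠ t in 𝓝[>] (0 : ℝ), ∀ i j : Fin n, (i : ℕ) < m → m ≤ (j : ℕ) → x j + t ≤ x i := by
    simp only [Filter.eventually_all]
    intro i j hi hj
    filter_upwards [Ioo_mem_nhdsGT (sub_pos.2 (h i j hi hj))] with t ht
    linarith [ht.2]
  exact (this.and self_mem_nhdsWithin).exists.imp fun t ht => ⟨ht.2, ht.1⟩

lemma Antitone.exists_const_block_dropsAt {x : Fin n → ℝ} (hx : Antitone x) (j : Fin n) :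
    ∃ lo hi : ℕ, lo ≤ j ∧ (j : ℕ) < hi ∧ hi ≤ n ∧
      (∀ i : Fin n, lo ≤ (i : ℕ) → (i : ℕ) < hi → x i = x j) ∧ DropsAt x lo ∧ DropsAt x hi := by
  classical
  set S : Finset (Fin n) := {i | x i = x j}
  have hj : j ∈ S := by simp [S]
  have hmin : x (S.min' ⟨j, hj⟩) = x j := by simpa [S] using S.min'_mem ⟨j, hj⟩
  have hmax : x (S.max' ⟨j, hj⟩) = x j := by simpa [S] using S.max'_mem ⟨j, hj⟩
  refine ⟨S.min' ⟨j, hj⟩, S.max' ⟨j, hj⟩ + 1, S.min'_le j hj, Nat.lt_succ_of_le (S.le_max' j hj),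
    (S.max' ⟨j, hj⟩).isLt, fun i hlo hhi => ?_, fun i i' hi hi' => ?_, fun i i' hi hi' => ?_⟩
  · exact le_antisymm (hmin ▸ hx (Fin.le_def.2 hlo)) (hmax ▸ hx (Fin.le_def.2 (by omega)))
  · have hiS : i ∉ S := fun h => (S.min'_le i h).not_gt hi
    have hji : x j ≤ x i := hmin ▸ hx hi.le
    have hi'j : x i' ≤ x j := hmin ▸ hx (Fin.le_def.2 hi')
    simp only [S, mem_filter, mem_univ, true_and] at hiS
    exact hi'j.trans_lt (hji.lt_of_ne (Ne.symm hiS))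
  · have hi'S : i' ∉ S := fun h => (S.le_max' i' h).not_gt (by rw [Fin.lt_def]; omega)
    have hji : x j ≤ x i := hmax ▸ hx (Fin.le_def.2 (by omega))
    have hi'j : x i' ≤ x j := hmax ▸ hx (Fin.le_def.2 (by omega))
    simp only [S, mem_filter, mem_univ, true_and] at hi'S
    exact (hi'j.lt_of_ne hi'S).trans_le hji

end PartialSum

lemma convex_monoCone (n : ℕ) : Convex ℝ (monoCone n) := by
  intro x hx y hy a b ha hb _ i j hij
  simp only [PiLp.add_apply, PiLp.smul_apply, smul_eq_mul]
  gcongr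
  exacts [hx i j hij, hy i j hij]

section Projection

variable {n : ℕ} {y p : EuclideanSpace ℝ (Fin n)}

lemma IsIsoProj.inner_sub_nonpos (h : IsIsoProj y p) {w : EuclideanSpace ℝ (Fin n)}
    (hw : w ∈ monoCone n) : ⟪y - p, w - p⟫ ≤ 0 := by
  have : Nonempty (monoCone n) := ⟨⟨p, h.1⟩⟩
  have hmin : ‖y - p‖ = ⨅ w : monoCone n, ‖y - (w : EuclideanSpace ℝ (Fin n))‖ :=
    le_antisymm (le_ciInf fun v : monoCone n => h.2 v v.2)
      (ciInf_le ⟨0, by rintro _ ⟨v, rfl⟩; positivity⟩ (⟨p, h.1⟩ : monoCone n))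
  exact (norm_eq_iInf_iff_real_inner_le_zero (convex_monoCone n) h.1).1 hmin w hw

lemma IsIsoProj.mul_partialSum_sub_nonpos (h : IsIsoProj y p) {m : ℕ} {t : ℝ}
    (ht : ∀ i j : Fin n, (i : ℕ) < m → m ≤ (j : ℕ) → p j ≤ p i + t) :
    t * (partialSum y m - partialSum p m) ≤ 0 := by
  set v : EuclideanSpace ℝ (Fin n) := WithLp.toLp 2 fun i => if (i : ℕ) < m then t else 0
  have hv : p + v ∈ monoCone n := by
    intro i j hij
    have := h.1 i j hij
    simp only [v, PiLp.add_apply]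
    split_ifs with hj hi hi
    · linarith
    · exact absurd (lt_of_le_of_lt (Fin.le_def.1 hij) hj) hi
    · linarith [ht i j hi (not_lt.1 hj)]
    · linarith
  have := h.inner_sub_nonpos hv
  rw [add_sub_cancel_left] at this
  convert this using 1
  simp only [v, PiLp.inner_apply, partialSum, sum_filter, mul_sum, ← sum_sub_distrib]
  exact sum_congr rfl fun i _ => by split_ifs <;> simp

lemma IsIsoProj.partialSum_le (h : IsIsoProj y p) (m : ℕ) : partialSum y m ≤ partialSum p m := by
  have := h.mul_partialSum_sub_nonpos (m := m) (t := 1) fun i j hi hj =>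
    by linarith [h.1 i j (Fin.le_def.2 (by omega))]
  linarith

lemma IsIsoProj.partialSum_eq_of_dropsAt (h : IsIsoProj y p) {m : ℕ} (hm : DropsAt p m) :
    partialSum y m = partialSum p m := by
  obtain ⟨t, ht, hgap⟩ := hm.exists_pos
  have := h.mul_partialSum_sub_nonpos (m := m) (t := -t) fun i j hi hj => by
    linarith [hgap i j hi hj]
  nlinarith [h.partialSum_le m]

lemma IsIsoProj.sum_eq (h : IsIsoProj y p) : ∑ i, p i = ∑ i, y i := by
  rw [← partialSum_of_le _ le_rfl, ← partialSum_of_le _ le_rfl,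
    h.partialSum_eq_of_dropsAt fun _ j _ hj => absurd j.isLt (by omega)]

lemma IsIsoProj.partialSum_le_of_partialSum_le {x : EuclideanSpace ℝ (Fin n)} (h : IsIsoProj y p)
    (hx : x ∈ monoCone n) (hyx : ∀ m ≤ n, partialSum y m ≤ partialSum x m) {k : ℕ}
    (hk : k ≤ n) : partialSum p k ≤ partialSum x k := by
  rcases k.eq_zero_or_pos with rfl | hk0
  · simp [partialSum_zero]
  obtain ⟨lo, hi, hlo, hhi, hin, hconst, hdlo, hdhi⟩ :=
    Antitone.exists_const_block_dropsAt h.1 ⟨k - 1, by omega⟩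
  simp only at hlo hhi
  have hpk := partialSum_eq_add_mul_of_const hconst (m := k) (by omega) (by omega) hk
  have hpq := partialSum_eq_add_mul_of_const hconst (by omega) le_rfl hin
  have hlo' : partialSum p lo ≤ partialSum x lo :=
    h.partialSum_eq_of_dropsAt hdlo ▸ hyx lo (by omega)
  have hhi' : partialSum p hi ≤ partialSum x hi := h.partialSum_eq_of_dropsAt hdhi ▸ hyx hi hin
  have hlok : (lo : ℝ) < k := by exact_mod_cast (by omega : lo < k)
  have hkhi : (k : ℝ) ≤ hi := by exact_mod_cast (by omega : k ≤ hi)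
  refine le_of_mul_le_mul_left ?_ (sub_pos.2 (hlok.trans_le hkhi))
  calc ((hi : ℝ) - lo) * partialSum p k
      = ((hi : ℝ) - k) * partialSum p lo + ((k : ℝ) - lo) * partialSum p hi := by
        rw [hpk, hpq]; ring
    _ ≤ ((hi : ℝ) - k) * partialSum x lo + ((k : ℝ) - lo) * partialSum x hi := by
        gcongr
    _ ≤ ((hi : ℝ) - lo) * partialSum x k := partialSum_chord hx (by omega) (by omega) hin

end Projection

/-- If `a ⪰_no b`, then the isotonic projection of `a` majorizes the isotonic
projection of `b`. -/
theorem isotonic_projection_preserves_majorization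
    {n : ℕ} (a b : EuclideanSpace ℝ (Fin n))
    (hab : MajorizesNO (a : Fin n → ℝ) (b : Fin n → ℝ))
    (ap bp : EuclideanSpace ℝ (Fin n))
    (hap : IsIsoProj a ap) (hbp : IsIsoProj b bp) :
    Majorizes (ap : Fin n → ℝ) (bp : Fin n → ℝ) := by
  have hb_le_ap : ∀ m ≤ n, partialSum b m ≤ partialSum ap m := by
    intro m hm
    refine le_trans ?_ (hap.partialSum_le m)
    rcases m.eq_zero_or_pos with rfl | hm0
    · simp [partialSum_zero]
    · exact hab.1 m hm0 hm
  refine ⟨fun k _ hk => ?_, ?_⟩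
  · rw [topKSum_eq_partialSum hbp.1 hk, topKSum_eq_partialSum hap.1 hk]
    exact hbp.partialSum_le_of_partialSum_le hap.1 hb_le_ap hk
  · rw [hap.sum_eq, hbp.sum_eq, ← partialSum_of_le _ le_rfl, ← partialSum_of_le _ le_rfl, hab.2]
end

section
/- Let a, b ∈ ℝⁿ. Then the inequality ∑_{i=1}^n h(a_i) ≥ ∑_{i=1}^n h(b_i) holds for every nondecreasing convex function h : ℝ → ℝ if and only if a weakly majorizes b (a ⪰_w b). -/
/-!
If `a ⪰_w b`, sort both vectors decreasingly, to `a↓` and `b↓`, and let `cᵢ ≥ 0` be the right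
derivative of `h` at `b↓ᵢ`; since `h` is convex the `cᵢ` decrease with `i`. The subgradient
inequality gives `∑ h(aᵢ) - ∑ h(bᵢ) ≥ ∑ cᵢ (a↓ᵢ - b↓ᵢ)`, and Abel summation writes the right-hand
side as a nonnegative combination of the partial sums of `a↓ - b↓`, which are nonnegative.

Conversely, test the inequality on the hinge functions `y ↦ (y - t)⁺`. For every `t`,
`k t + ∑ (xᵢ - t)⁺` bounds the sum of the `k` largest entries of `x`, with equality when `t` is the
`k`-th largest entry of `x`.
-/

noncomputable section

/-- `a` weakly majorizes `b`: for every `k = 1, …, n` the sum of the `k` largest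
entries of `a` is at least that of `b`. -/
def WeakMajorizes {n : ℕ} (a b : Fin n → ℝ) : Prop :=
  ∀ k, 1 ≤ k → k ≤ n → topKSum b k ≤ topKSum a k

open Finset

section Subgradient

variable {f : ℝ → ℝ}

lemma ConvexOn.rightDeriv_mul_sub_le (hf : ConvexOn ℝ Set.univ f) (x y : ℝ) :
    derivWithin f (Set.Ioi x) x * (y - x) ≤ f y - f x := by
  have hx : x ∈ interior (Set.univ : Set ℝ) := by simp
  rcases lt_trichotomy x y with hxy | rfl | hyx
  · have h := hf.rightDeriv_le_slope_of_mem_interior hx (Set.mem_univ y) hxy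
    rwa [slope_def_field, le_div_iff₀ (sub_pos.2 hxy)] at h
  · simp
  · have h := (hf.slope_le_leftDeriv_of_mem_interior (Set.mem_univ y) hx hyx).trans
      (hf.leftDeriv_le_rightDeriv_of_mem_interior hx)
    rw [slope_def_field, div_le_iff₀ (sub_pos.2 hyx)] at h
    linarith

lemma ConvexOn.monotone_rightDeriv (hf : ConvexOn ℝ Set.univ f) :
    Monotone fun x => derivWithin f (Set.Ioi x) x := by
  simpa using hf.monotoneOn_rightDeriv

end Subgradient

lemma sum_range_mul_nonneg_of_antitoneOn {c d : ℕ → ℝ} {m : ℕ}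
    (hc : AntitoneOn c (Set.Iio m)) (hc₀ : ∀ i < m, 0 ≤ c i)
    (hd : ∀ k ≤ m, 0 ≤ ∑ i ∈ range k, d i) :
    0 ≤ ∑ i ∈ range m, c i * d i := by
  rcases Nat.eq_zero_or_pos m with rfl | hm
  · simp
  have h := sum_range_by_parts c d m
  simp only [smul_eq_mul] at h
  rw [h]
  refine sub_nonneg_of_le ((sum_nonpos fun i hi => ?_).trans ?_)
  · have hi : i + 1 < m := by rw [mem_range] at hi; omega
    exact mul_nonpos_of_nonpos_of_nonneg
      (sub_nonpos.2 (hc (Set.mem_Iio.2 (by omega)) (Set.mem_Iio.2 hi) (by omega))) (hd _ hi.le)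
  · exact mul_nonneg (hc₀ _ (by omega)) (hd m le_rfl)

lemma sum_le_sum_range_card_of_antitoneOn {u : ℕ → ℝ} {m : ℕ} (hu : AntitoneOn u (Set.Iio m))
    {S : Finset ℕ} (hS : S ⊆ range m) : ∑ i ∈ S, u i ≤ ∑ i ∈ range #S, u i := by
  induction S using Finset.induction_on_max with
  | empty => simp
  | insert a s has ih =>
    have ha : a ∉ s := fun h => lt_irrefl a (has a h)
    have hsa : #s ≤ a := by simpa using card_le_card fun x hx => mem_range.2 (has x hx)
    have ham : a < m := mem_range.1 (hS (mem_insert_self a s))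
    rw [sum_insert ha, card_insert_of_notMem ha, sum_range_succ, add_comm]
    exact add_le_add (ih ((subset_insert a s).trans hS))
      (hu (Set.mem_Iio.2 (by omega)) (Set.mem_Iio.2 ham) hsa)

/-- The Tomić–Weyl inequality. -/
theorem sum_range_comp_le_of_sum_range_le {f : ℝ → ℝ} (hf : Monotone f)
    (hfc : ConvexOn ℝ Set.univ f) {u v : ℕ → ℝ} {m : ℕ} (hv : AntitoneOn v (Set.Iio m))
    (huv : ∀ k ≤ m, ∑ i ∈ range k, v i ≤ ∑ i ∈ range k, u i) :
    ∑ i ∈ range m, f (v i) ≤ ∑ i ∈ range m, f (u i) := by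
  set c := fun i => derivWithin f (Set.Ioi (v i)) (v i)
  have hsub : ∑ i ∈ range m, c i * (u i - v i) ≤ ∑ i ∈ range m, (f (u i) - f (v i)) :=
    sum_le_sum fun i _ => hfc.rightDeriv_mul_sub_le (v i) (u i)
  have habel : 0 ≤ ∑ i ∈ range m, c i * (u i - v i) :=
    sum_range_mul_nonneg_of_antitoneOn (hfc.monotone_rightDeriv.comp_antitoneOn hv)
      (fun i _ => (hf.monotoneOn _).derivWithin_nonneg)
      (fun k hk => by simpa [sum_sub_distrib] using huv k hk)
  rw [sum_sub_distrib] at hsub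
  linarith

lemma monotone_posPart_sub (t : ℝ) : Monotone fun y : ℝ => (y - t)⁺ :=
  posPart_mono.comp fun _ _ h => sub_le_sub_right h t

lemma convexOn_posPart_sub (t : ℝ) : ConvexOn ℝ Set.univ fun y : ℝ => (y - t)⁺ := by
  simp only [posPart_def]
  exact ((convexOn_id convex_univ).sub (concaveOn_const t convex_univ)).sup
    (convexOn_const 0 convex_univ)

section

variable {n : ℕ}

lemma sum_le_topKSum (x : Fin n → ℝ) {S : Finset (Fin n)} :
    ∑ i ∈ S, x i ≤ topKSum x #S :=
  le_csSup ((Set.toFinite _).image _).bddAbove ⟨S, rfl, rfl⟩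

lemma topKSum_le {x : Fin n → ℝ} {k : ℕ} (hk : k ≤ n) {c : ℝ}
    (h : ∀ S : Finset (Fin n), #S = k → ∑ i ∈ S, x i ≤ c) : topKSum x k ≤ c := by
  obtain ⟨S, -, hS⟩ := exists_subset_card_eq (s := (univ : Finset (Fin n))) (by simpa using hk)
  refine csSup_le ⟨_, S, hS, rfl⟩ ?_
  rintro _ ⟨S, hS, rfl⟩
  exact h S hS

lemma topKSum_le_mul_add_sum_posPart (x : Fin n → ℝ) {k : ℕ} (hk : k ≤ n) (t : ℝ) :
    topKSum x k ≤ k * t + ∑ i, (x i - t)⁺ :=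
  topKSum_le hk fun S hS => calc
    ∑ i ∈ S, x i ≤ ∑ i ∈ S, (t + (x i - t)⁺) :=
      sum_le_sum fun i _ => by linarith [le_posPart (x i - t)]
    _ = k * t + ∑ i ∈ S, (x i - t)⁺ := by simp [sum_add_distrib, hS]
    _ ≤ k * t + ∑ i, (x i - t)⁺ := add_le_add le_rfl
      (sum_le_sum_of_subset_of_nonneg (subset_univ S) fun i _ _ => posPart_nonneg (x i - t))

/-- `decreasingRearrangement x i` is the `(i + 1)`-th largest entry of `x` for `i < n`, and `0`
for `i ≥ n`. -/
def decreasingRearrangement (x : Fin n → ℝ) (i : ℕ) : ℝ :=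
  if h : i < n then x (Tuple.sort (OrderDual.toDual ∘ x) ⟨i, h⟩) else 0

lemma decreasingRearrangement_val (x : Fin n → ℝ) (i : Fin n) :
    decreasingRearrangement x i = x (Tuple.sort (OrderDual.toDual ∘ x) i) := by
  simp [decreasingRearrangement]

lemma decreasingRearrangement_sort_symm (x : Fin n → ℝ) (i : Fin n) :
    decreasingRearrangement x ((Tuple.sort (OrderDual.toDual ∘ x)).symm i) = x i := by
  simp [decreasingRearrangement_val]

lemma antitoneOn_decreasingRearrangement (x : Fin n → ℝ) :
    AntitoneOn (decreasingRearrangement x) (Set.Iio n) := by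
  intro i hi j hj hij
  lift i to Fin n using hi
  lift j to Fin n using hj
  simp only [decreasingRearrangement_val]
  exact Tuple.monotone_sort (OrderDual.toDual ∘ x) (Fin.le_iff_val_le_val.2 hij)

lemma sum_range_comp_decreasingRearrangement (x : Fin n → ℝ) (g : ℝ → ℝ) :
    ∑ i ∈ range n, g (decreasingRearrangement x i) = ∑ i, g (x i) := by
  rw [← Fin.sum_univ_eq_sum_range]
  simp only [decreasingRearrangement_val]
  exact Equiv.sum_comp _ (g ∘ x)

lemma topKSum_eq_sum_range_decreasingRearrangement (x : Fin n → ℝ) {k : ℕ} (hk : k ≤ n) :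
    topKSum x k = ∑ i ∈ range k, decreasingRearrangement x i := by
  set σ := Tuple.sort (OrderDual.toDual ∘ x)
  refine le_antisymm (topKSum_le hk fun S hS => ?_) ?_
  · set e := σ.symm.toEmbedding.trans Fin.valEmbedding
    calc ∑ i ∈ S, x i = ∑ j ∈ S.map e, decreasingRearrangement x j := by
          simp [e, σ, decreasingRearrangement_sort_symm]
      _ ≤ ∑ j ∈ range #(S.map e), decreasingRearrangement x j :=
          sum_le_sum_range_card_of_antitoneOn (antitoneOn_decreasingRearrangement x)
            fun j hj => by obtain ⟨i, -, rfl⟩ := mem_map.1 hj; simp [e]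
      _ = _ := by rw [card_map, hS]
  · set e := (Fin.castLEEmb hk).trans σ.toEmbedding
    calc ∑ i ∈ range k, decreasingRearrangement x i = ∑ i ∈ univ.map e, x i := by
          rw [← Fin.sum_univ_eq_sum_range, sum_map]
          exact sum_congr rfl fun i _ => decreasingRearrangement_val x (Fin.castLE hk i)
      _ ≤ topKSum x k := by simpa using sum_le_topKSum x (S := univ.map e)

lemma topKSum_eq_mul_add_sum_posPart (x : Fin n → ℝ) {k : ℕ} (hk₀ : 0 < k) (hk : k ≤ n) :
    topKSum x k = k * decreasingRearrangement x (k - 1)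
      + ∑ i, (x i - decreasingRearrangement x (k - 1))⁺ := by
  set t := decreasingRearrangement x (k - 1)
  have hanti := antitoneOn_decreasingRearrangement x
  have h_top : ∀ i ∈ range k,
      (decreasingRearrangement x i - t)⁺ = decreasingRearrangement x i - t := fun i hi => by
    rw [mem_range] at hi
    exact posPart_eq_self.2 <| sub_nonneg.2 <|
      hanti (Set.mem_Iio.2 (by omega)) (Set.mem_Iio.2 (by omega)) (by omega)
  have h_rest : ∀ i ∈ Ico k n, (decreasingRearrangement x i - t)⁺ = 0 := fun i hi => by
    rw [mem_Ico] at hi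
    exact posPart_eq_zero.2 <| sub_nonpos.2 <|
      hanti (Set.mem_Iio.2 (by omega)) (Set.mem_Iio.2 (by omega)) (by omega)
  rw [← sum_range_comp_decreasingRearrangement x (fun y => (y - t)⁺),
    ← sum_range_add_sum_Ico _ hk, sum_congr rfl h_top, sum_congr rfl h_rest,
    topKSum_eq_sum_range_decreasingRearrangement x hk]
  simp [sum_sub_distrib]

end

/-- `∑ h(a_i) ≥ ∑ h(b_i)` for all nondecreasing convex `h` iff `a` weakly
majorizes `b`. -/
theorem sum_nondecreasing_convex_ge_iff_weakMajorizes
    {n : ℕ} (a b : Fin n → ℝ) :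
    (∀ h : ℝ → ℝ, Monotone h → ConvexOn ℝ Set.univ h →
      ∑ i, h (b i) ≤ ∑ i, h (a i)) ↔ WeakMajorizes a b := by
  constructor
  · intro H k hk₀ hk
    set t := decreasingRearrangement a (k - 1)
    calc topKSum b k ≤ k * t + ∑ i, (b i - t)⁺ := topKSum_le_mul_add_sum_posPart b hk t
      _ ≤ k * t + ∑ i, (a i - t)⁺ :=
          add_le_add le_rfl (H _ (monotone_posPart_sub t) (convexOn_posPart_sub t))
      _ = topKSum a k := (topKSum_eq_mul_add_sum_posPart a hk₀ hk).symm
  · intro hab f hf hfc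
    rw [← sum_range_comp_decreasingRearrangement a, ← sum_range_comp_decreasingRearrangement b]
    refine sum_range_comp_le_of_sum_range_le hf hfc (antitoneOn_decreasingRearrangement b)
      fun k hk => ?_
    rcases Nat.eq_zero_or_pos k with rfl | hk₀
    · simp
    rw [← topKSum_eq_sum_range_decreasingRearrangement a hk,
      ← topKSum_eq_sum_range_decreasingRearrangement b hk]
    exact hab k hk₀ hk
end
end

section
/- Let f, g : ℝ → ℝ be differentiable convex functions such that f′(t) ≥ g′(t) for every t ∈ ℝ. Then for all real numbers x ≥ y and every α ∈ [0,1], f(αx + (1−α)y) + g(αy + (1−α)x) ≤ f(x) + g(y). -/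
/-- For differentiable convex `f, g` with `f' ≥ g'` everywhere, and `x ≥ y`,
`α ∈ [0,1]`: `f(αx + (1-α)y) + g(αy + (1-α)x) ≤ f(x) + g(y)`. -/
theorem convex_pair_transfer_inequality
    (f g : ℝ → ℝ)
    (hf : ConvexOn ℝ Set.univ f) (hg : ConvexOn ℝ Set.univ g)
    (hfd : Differentiable ℝ f) (hgd : Differentiable ℝ g)
    (hderiv : ∀ t : ℝ, deriv g t ≤ deriv f t)
    (x y : ℝ) (hxy : y ≤ x) (α : ℝ) (hα0 : 0 ≤ α) (hα1 : α ≤ 1) :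
    f (α * x + (1 - α) * y) + g (α * y + (1 - α) * x) ≤ f x + g y := by
  have hmono : Monotone (fun t => f t - g t) := by
    apply monotone_of_deriv_nonneg (hfd.sub hgd)
    intro t
    rw [deriv_sub (hfd t) (hgd t)]
    linarith [hderiv t]
  have hkey : f y + g x ≤ f x + g y := by
    have := hmono hxy
    simp only at this
    linarith
  have h1 : f (α * x + (1 - α) * y) ≤ α * f x + (1 - α) * f y := by
    have := hf.2 (Set.mem_univ x) (Set.mem_univ y) hα0 (show (0:ℝ) ≤ 1 - α by linarith) (by ring)
    simpa using this
  have h2 : g (α * y + (1 - α) * x) ≤ α * g y + (1 - α) * g x := by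
    have := hg.2 (Set.mem_univ y) (Set.mem_univ x) hα0 (show (0:ℝ) ≤ 1 - α by linarith) (by ring)
    simpa using this
  nlinarith [hkey, h1, h2]
end

section
/- Let n ≥ 1 and let U₁, …, U_n : ℝ → ℝ be differentiable convex nondecreasing functions satisfying U_i′(t) ≥ U_{i+1}′(t) for all t ∈ ℝ and all i = 1,…,n−1. Let a, b ∈ ℝⁿ be vectors with nonincreasing coordinates (a₁ ≥ ⋯ ≥ a_n and b₁ ≥ ⋯ ≥ b_n) such that a ⪰ b. Then ∑_{i=1}^n U_i(a_i) ≥ ∑_{i=1}^n U_i(b_i). -/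
noncomputable section

/-- A strictly monotone map `Fin k → Fin n` satisfies `j ≤ v j`. -/
lemma strictMono_le_apply {n k : ℕ} {v : Fin k → Fin n} (hv : StrictMono v) :
    ∀ (j : ℕ) (h : j < k), j ≤ (v ⟨j, h⟩ : ℕ) := by
  intro j
  induction j with
  | zero => intro h; exact Nat.zero_le _
  | succ i ih =>
    intro h
    have hi : i < k := Nat.lt_of_succ_lt h
    have h1 := ih hi
    have h2 : v ⟨i, hi⟩ < v ⟨i + 1, h⟩ := hv (by simp [Fin.lt_def])
    have h3 := Fin.lt_def.mp h2
    omega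

/-- For a nonincreasing vector, the top-`k` sum is the sum of the first `k` entries. -/
lemma topKSum_sorted {n : ℕ} (x : Fin n → ℝ)
    (hx : ∀ i j : Fin n, i ≤ j → x j ≤ x i) {k : ℕ} (hk : k ≤ n) :
    topKSum x k = ∑ j : Fin k, x (Fin.castLE hk j) := by
  unfold topKSum
  have hmem : (Finset.univ.map (Fin.castLEEmb hk) : Finset (Fin n)) ∈
      {S : Finset (Fin n) | S.card = k} := by
    simp [Set.mem_setOf_eq]
  have hsum : ∑ i ∈ (Finset.univ.map (Fin.castLEEmb hk) : Finset (Fin n)), x i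
      = ∑ j : Fin k, x (Fin.castLE hk j) := by
    rw [Finset.sum_map]
    rfl
  apply le_antisymm
  · apply csSup_le
    · exact ⟨_, ⟨_, hmem, rfl⟩⟩
    · rintro r ⟨S, hS, rfl⟩
      simp only [Set.mem_setOf_eq] at hS
      set e := S.orderEmbOfFin hS with he
      have hSeq : S = Finset.univ.map e.toEmbedding := by
        apply Finset.coe_injective
        simp only [Finset.coe_map, Finset.coe_univ, Set.image_univ]
        rw [show ⇑e.toEmbedding = ⇑e from rfl]
        exact (Finset.range_orderEmbOfFin S hS).symm
      simp only [hSeq]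
      rw [Finset.sum_map]
      refine Finset.sum_le_sum fun j _ => ?_
      apply hx
      rw [Fin.le_def]
      exact strictMono_le_apply e.strictMono j.1 j.2
  · apply le_csSup
    · exact (Set.toFinite _).image _ |>.bddAbove
    · exact ⟨_, hmem, hsum⟩

/-- Tangent line inequality for differentiable convex functions. -/
lemma tangent_line_le {f : ℝ → ℝ} (hf : ConvexOn ℝ Set.univ f)
    (hd : Differentiable ℝ f) (x y : ℝ) :
    f x + deriv f x * (y - x) ≤ f y := by
  rcases lt_trichotomy x y with h | h | h
  · have hs := hf.deriv_le_slope (Set.mem_univ x) (Set.mem_univ y) h (hd x)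
    rw [slope_def_field] at hs
    have hxy : (0 : ℝ) < y - x := by linarith
    have := (le_div_iff₀ hxy).mp hs
    linarith
  · simp [h]
  · have hs := hf.slope_le_deriv (Set.mem_univ y) (Set.mem_univ x) h (hd x)
    rw [slope_def_field] at hs
    have hxy : (0 : ℝ) < x - y := by linarith
    have := (div_le_iff₀ hxy).mp hs
    nlinarith

/-- A monotone differentiable convex function has nonnegative derivative. -/
lemma deriv_nonneg_of_monotone {f : ℝ → ℝ} (hf : ConvexOn ℝ Set.univ f)
    (hd : Differentiable ℝ f) (hm : Monotone f) (t : ℝ) : 0 ≤ deriv f t := by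
  have hs := hf.slope_le_deriv (Set.mem_univ (t - 1)) (Set.mem_univ t)
    (by linarith) (hd t)
  rw [slope_def_field] at hs
  have h1 : f (t - 1) ≤ f t := hm (by linarith)
  have h2 : t - (t - 1) = 1 := by ring
  rw [h2, div_one] at hs
  linarith

/-- Abel summation: if `c` is nonincreasing and nonnegative on `[0,n)`, the partial
sums of `x` are nonnegative and the full sum is zero, then `∑ c i * x i ≥ 0`. -/
lemma abel_sum_nonneg (n : ℕ) (c x : ℕ → ℝ)
    (hc0 : ∀ i, i < n → 0 ≤ c i)
    (hcm : ∀ i, i + 1 < n → c (i + 1) ≤ c i)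
    (hA : ∀ k, 1 ≤ k → k ≤ n → 0 ≤ ∑ i ∈ Finset.range k, x i)
    (hAn : ∑ i ∈ Finset.range n, x i = 0) :
    0 ≤ ∑ i ∈ Finset.range n, c i * x i := by
  rcases Nat.eq_zero_or_pos n with rfl | hn
  · simp
  have hby := Finset.sum_range_by_parts c x n
  simp only [smul_eq_mul] at hby
  rw [hby, hAn, mul_zero, zero_sub]
  rw [neg_nonneg]
  apply Finset.sum_nonpos
  intro i hi
  rw [Finset.mem_range] at hi
  have hi1 : i + 1 < n := by omega
  have h1 : c (i + 1) - c i ≤ 0 := by linarith [hcm i hi1]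
  have h2 : 0 ≤ ∑ j ∈ Finset.range (i + 1), x j := hA (i + 1) (by omega) (by omega)
  exact mul_nonpos_of_nonpos_of_nonneg h1 h2

/-- For differentiable convex nondecreasing utilities `U₁, …, U_n` with
`U_i' ≥ U_{i+1}'`, and nonincreasing vectors `a ⪰ b`,
`∑ U_i(a_i) ≥ ∑ U_i(b_i)`. -/
theorem informed_utility_schur_convex
    {n : ℕ} (hn : 1 ≤ n) (U : Fin n → ℝ → ℝ)
    (hUc : ∀ i, ConvexOn ℝ Set.univ (U i))
    (hUm : ∀ i, Monotone (U i))
    (hUd : ∀ i, Differentiable ℝ (U i))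
    (hU' : ∀ (i : Fin n) (h : (i : ℕ) + 1 < n) (t : ℝ),
      deriv (U ⟨(i : ℕ) + 1, h⟩) t ≤ deriv (U i) t)
    (a b : Fin n → ℝ)
    (ha : ∀ i j : Fin n, i ≤ j → a j ≤ a i)
    (hb : ∀ i j : Fin n, i ≤ j → b j ≤ b i)
    (hab : Majorizes a b) :
    ∑ i, U i (b i) ≤ ∑ i, U i (a i) := by
  classical
  set c : ℕ → ℝ := fun i => if h : i < n then deriv (U ⟨i, h⟩) (b ⟨i, h⟩) else 0 with hc
  set x : ℕ → ℝ := fun i => if h : i < n then a ⟨i, h⟩ - b ⟨i, h⟩ else 0 with hxdef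
  -- tangent line inequality for each coordinate
  have key : ∀ i : Fin n, U i (b i) + deriv (U i) (b i) * (a i - b i) ≤ U i (a i) :=
    fun i => tangent_line_le (hUc i) (hUd i) (b i) (a i)
  -- it suffices to show the correction sum is nonnegative
  have hsuff : 0 ≤ ∑ i : Fin n, deriv (U i) (b i) * (a i - b i) → 
      ∑ i, U i (b i) ≤ ∑ i, U i (a i) := by
    intro h
    calc ∑ i, U i (b i) ≤ ∑ i, U i (b i) + ∑ i : Fin n, deriv (U i) (b i) * (a i - b i) := by
          linarith
      _ = ∑ i : Fin n, (U i (b i) + deriv (U i) (b i) * (a i - b i)) := by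
          rw [Finset.sum_add_distrib]
      _ ≤ ∑ i, U i (a i) := Finset.sum_le_sum fun i _ => key i
  apply hsuff
  -- rewrite as a sum over `range n`
  have hrw : ∑ i : Fin n, deriv (U i) (b i) * (a i - b i)
      = ∑ i ∈ Finset.range n, c i * x i := by
    rw [← Fin.sum_univ_eq_sum_range (fun i => c i * x i) n]
    refine Finset.sum_congr rfl fun i _ => ?_
    simp only [hc, hxdef, dif_pos i.isLt, Fin.eta]
  rw [hrw]
  apply abel_sum_nonneg
  · -- nonnegativity of c
    intro i hi
    simp only [hc, dif_pos hi]
    exact deriv_nonneg_of_monotone (hUc _) (hUd _) (hUm _) _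
  · -- monotonicity of c
    intro i hi1
    have hi : i < n := by omega
    simp only [hc, dif_pos hi1, dif_pos hi]
    have hmono : MonotoneOn (deriv (U ⟨i + 1, hi1⟩)) Set.univ :=
      (hUc _).monotoneOn_deriv fun t _ => (hUd _) t
    have hble : b ⟨i + 1, hi1⟩ ≤ b ⟨i, hi⟩ := hb ⟨i, hi⟩ ⟨i + 1, hi1⟩ (by simp [Fin.le_def])
    calc deriv (U ⟨i + 1, hi1⟩) (b ⟨i + 1, hi1⟩)
        ≤ deriv (U ⟨i + 1, hi1⟩) (b ⟨i, hi⟩) :=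
          hmono (Set.mem_univ _) (Set.mem_univ _) hble
      _ ≤ deriv (U ⟨i, hi⟩) (b ⟨i, hi⟩) := hU' ⟨i, hi⟩ hi1 _
  · -- partial sums nonnegative via majorization
    intro k hk1 hkn
    have hsum : ∑ i ∈ Finset.range k, x i
        = ∑ j : Fin k, (a (Fin.castLE hkn j) - b (Fin.castLE hkn j)) := by
      rw [← Fin.sum_univ_eq_sum_range x k]
      refine Finset.sum_congr rfl fun j _ => ?_
      simp only [hxdef, dif_pos (lt_of_lt_of_le j.isLt hkn)]
      rfl
    rw [hsum, Finset.sum_sub_distrib]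
    have h1 := topKSum_sorted a ha hkn
    have h2 := topKSum_sorted b hb hkn
    have h3 := hab.1 k hk1 hkn
    rw [h1, h2] at h3
    linarith
  · -- total sum zero
    have hsum : ∑ i ∈ Finset.range n, x i = ∑ i : Fin n, a i - ∑ i : Fin n, b i := by
      rw [← Fin.sum_univ_eq_sum_range x n, ← Finset.sum_sub_distrib]
      refine Finset.sum_congr rfl fun j _ => ?_
      simp only [hxdef, dif_pos j.isLt, Fin.eta]
    rw [hsum, hab.2, sub_self]
end
end
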